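/- Let r̃ ∈ A⊗A satisfy r̃ + r̃^{21} = P, and set r₀(v) = (r̃ + e^v·r̃^{21})/(1 − e^v). Then for all v, v′ with e^v ≠ 1, e^{v′} ≠ 1, e^{v+v′} ≠ 1: r₀^{12}(v)·r₀^{13}(v+v′) − r₀^{23}(v′)·r₀^{12}(v) + r₀^{13}(v+v′)·r₀^{23}(v′) = r̃^{12}·r̃^{13} − r̃^{23}·r̃^{12} + r̃^{13}·r̃^{23}. -/
import Mathlib


open Complex

/-- `Matₙ(ℂ)` -/
abbrev M1 (n : ℕ) := Matrix (Fin n) (Fin n) ℂ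
/-- `Matₙ ⊗ Matₙ`, realized as matrices indexed by pairs (Kronecker indexing). -/
abbrev M2 (n : ℕ) := Matrix (Fin n × Fin n) (Fin n × Fin n) ℂ
/-- `Matₙ ⊗ Matₙ ⊗ Matₙ`. -/
abbrev M3 (n : ℕ) := Matrix (Fin n × Fin n × Fin n) (Fin n × Fin n × Fin n) ℂ

/-- matrix unit `e_{ij}` (ℕ-indexed, zero if out of range) -/
def Eu (n : ℕ) (i j : ℕ) : M1 n := fun a b => if (a : ℕ) = i ∧ (b : ℕ) = j then 1 else 0

/-- Kronecker/tensor product of two matrices: `a ⊗ b`. -/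
def tens {n : ℕ} (a b : M1 n) : M2 n := fun p q => a p.1 q.1 * b p.2 q.2

/-- `x ↦ x^{12}` -/
def emb12 {n : ℕ} (x : M2 n) : M3 n :=
  fun p q => x (p.1, p.2.1) (q.1, q.2.1) * (if p.2.2 = q.2.2 then 1 else 0)
/-- `x ↦ x^{13}` -/
def emb13 {n : ℕ} (x : M2 n) : M3 n :=
  fun p q => x (p.1, p.2.2) (q.1, q.2.2) * (if p.2.1 = q.2.1 then 1 else 0)
/-- `x ↦ x^{23}` -/
def emb23 {n : ℕ} (x : M2 n) : M3 n :=
  fun p q => x (p.2.1, p.2.2) (q.2.1, q.2.2) * (if p.1 = q.1 then 1 else 0)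
/-- `x ↦ x^{21}` (flip of the two tensor factors) -/
def flipT {n : ℕ} (x : M2 n) : M2 n := fun p q => x (p.2, p.1) (q.2, q.1)

/-- The permutation matrix `P = Σ_{i,j} e_{ij} ⊗ e_{ji}`. -/
def Pmat (n : ℕ) : M2 n := fun p q => if p.1 = q.2 ∧ p.2 = q.1 then 1 else 0

/-- Left-hand side of the AYBE with two spectral parameters. -/
noncomputable def aybeLHS {n : ℕ} (r : ℂ → ℂ → M2 n) (u u' v v' : ℂ) : M3 n :=
  emb12 (r (-u') v) * emb13 (r (u + u') (v + v'))
    - emb23 (r (u + u') v') * emb12 (r u v)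
    + emb13 (r u (v + v')) * emb23 (r u' v')

/-- Left-hand side of the CYBE with spectral parameter. -/
noncomputable def cybeLHS {n : ℕ} (f : ℂ → M2 n) (v v' : ℂ) : M3 n :=
  (emb12 (f v) * emb13 (f (v + v')) - emb13 (f (v + v')) * emb12 (f v))
    + (emb12 (f v) * emb23 (f v') - emb23 (f v') * emb12 (f v))
    + (emb13 (f (v + v')) * emb23 (f v') - emb23 (f v') * emb13 (f (v + v')))

section Aux
variable {n : ℕ}

lemma Q12_mul_apply (y : M3 n) (p q : Fin n × Fin n × Fin n) :
    (emb12 (Pmat n) * y) p q = y (p.2.1, p.1, p.2.2) q := by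
  rw [Matrix.mul_apply]
  rw [Fintype.sum_eq_single ((p.2.1, p.1, p.2.2) : Fin n × Fin n × Fin n)]
  · simp [emb12, Pmat]
  · rintro ⟨b1, b2, b3⟩ hb
    rcases p with ⟨p1, p2, p3⟩
    simp only [emb12, Pmat, Prod.mk.injEq, ne_eq] at hb ⊢
    split_ifs with h1 h2 <;> simp_all

lemma mul_Q12_apply (y : M3 n) (p q : Fin n × Fin n × Fin n) :
    (y * emb12 (Pmat n)) p q = y p (q.2.1, q.1, q.2.2) := by
  rw [Matrix.mul_apply]
  rw [Fintype.sum_eq_single ((q.2.1, q.1, q.2.2) : Fin n × Fin n × Fin n)]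
  · simp [emb12, Pmat]
  · rintro ⟨b1, b2, b3⟩ hb
    rcases q with ⟨q1, q2, q3⟩
    simp only [emb12, Pmat, Prod.mk.injEq, ne_eq] at hb ⊢
    split_ifs with h1 h2 <;> simp_all

lemma Q13_mul_apply (y : M3 n) (p q : Fin n × Fin n × Fin n) :
    (emb13 (Pmat n) * y) p q = y (p.2.2, p.2.1, p.1) q := by
  rw [Matrix.mul_apply]
  rw [Fintype.sum_eq_single ((p.2.2, p.2.1, p.1) : Fin n × Fin n × Fin n)]
  · simp [emb13, Pmat]
  · rintro ⟨b1, b2, b3⟩ hb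
    rcases p with ⟨p1, p2, p3⟩
    simp only [emb13, Pmat, Prod.mk.injEq, ne_eq] at hb ⊢
    split_ifs with h1 h2 <;> simp_all

lemma mul_Q13_apply (y : M3 n) (p q : Fin n × Fin n × Fin n) :
    (y * emb13 (Pmat n)) p q = y p (q.2.2, q.2.1, q.1) := by
  rw [Matrix.mul_apply]
  rw [Fintype.sum_eq_single ((q.2.2, q.2.1, q.1) : Fin n × Fin n × Fin n)]
  · simp [emb13, Pmat]
  · rintro ⟨b1, b2, b3⟩ hb
    rcases q with ⟨q1, q2, q3⟩
    simp only [emb13, Pmat, Prod.mk.injEq, ne_eq] at hb ⊢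
    split_ifs with h1 h2 <;> simp_all

lemma Q23_mul_apply (y : M3 n) (p q : Fin n × Fin n × Fin n) :
    (emb23 (Pmat n) * y) p q = y (p.1, p.2.2, p.2.1) q := by
  rw [Matrix.mul_apply]
  rw [Fintype.sum_eq_single ((p.1, p.2.2, p.2.1) : Fin n × Fin n × Fin n)]
  · simp [emb23, Pmat]
  · rintro ⟨b1, b2, b3⟩ hb
    rcases p with ⟨p1, p2, p3⟩
    simp only [emb23, Pmat, Prod.mk.injEq, ne_eq] at hb ⊢
    split_ifs with h1 h2 <;> simp_all

lemma mul_Q23_apply (y : M3 n) (p q : Fin n × Fin n × Fin n) :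
    (y * emb23 (Pmat n)) p q = y p (q.1, q.2.2, q.2.1) := by
  rw [Matrix.mul_apply]
  rw [Fintype.sum_eq_single ((q.1, q.2.2, q.2.1) : Fin n × Fin n × Fin n)]
  · simp [emb23, Pmat]
  · rintro ⟨b1, b2, b3⟩ hb
    rcases q with ⟨q1, q2, q3⟩
    simp only [emb23, Pmat, Prod.mk.injEq, ne_eq] at hb ⊢
    split_ifs with h1 h2 <;> simp_all

lemma lemA (x : M2 n) : emb12 (Pmat n) * emb13 x = emb23 x * emb12 (Pmat n) := by
  ext p q
  rw [Q12_mul_apply, mul_Q12_apply]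
  rfl

lemma lemB (x : M2 n) :
    emb13 (Pmat n) * emb23 x = emb12 (flipT x) * emb13 (Pmat n) := by
  ext p q
  rw [Q13_mul_apply, mul_Q13_apply]
  rfl

lemma lemC (x : M2 n) : emb23 (Pmat n) * emb12 x = emb13 x * emb23 (Pmat n) := by
  ext p q
  rw [Q23_mul_apply, mul_Q23_apply]
  rfl

lemma lemD : emb23 (Pmat n) * emb12 (Pmat n) = emb12 (Pmat n) * emb13 (Pmat n) := by
  ext p q
  rw [Q23_mul_apply, Q12_mul_apply]
  rcases p with ⟨p1, p2, p3⟩; rcases q with ⟨q1, q2, q3⟩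
  simp only [emb12, emb13, Pmat]
  split_ifs <;> simp_all

lemma lemE : emb13 (Pmat n) * emb23 (Pmat n) = emb12 (Pmat n) * emb13 (Pmat n) := by
  ext p q
  rw [Q13_mul_apply, Q12_mul_apply]
  rcases p with ⟨p1, p2, p3⟩; rcases q with ⟨q1, q2, q3⟩
  simp only [emb23, emb13, Pmat]
  split_ifs <;> simp_all

lemma emb12_add (x y : M2 n) : emb12 (x + y) = emb12 x + emb12 y := by
  funext p q; simp [emb12, Matrix.add_apply]; split_ifs <;> simp

lemma emb13_add (x y : M2 n) : emb13 (x + y) = emb13 x + emb13 y := by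
  funext p q; simp [emb13, Matrix.add_apply]; split_ifs <;> simp

lemma emb23_add (x y : M2 n) : emb23 (x + y) = emb23 x + emb23 y := by
  funext p q; simp [emb23, Matrix.add_apply]; split_ifs <;> simp

lemma emb12_smul (t : ℂ) (x : M2 n) : emb12 (t • x) = t • emb12 x := by
  funext p q; simp [emb12, Matrix.smul_apply, smul_eq_mul]

lemma emb13_smul (t : ℂ) (x : M2 n) : emb13 (t • x) = t • emb13 x := by
  funext p q; simp [emb13, Matrix.smul_apply, smul_eq_mul]

lemma emb23_smul (t : ℂ) (x : M2 n) : emb23 (t • x) = t • emb23 x := by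
  funext p q; simp [emb23, Matrix.smul_apply, smul_eq_mul]

end Aux

lemma cubic_aux {R : Type*} [Ring R] [Module ℂ R] [SMulCommClass ℂ R R] [IsScalarTower ℂ R R]
    (A12 A13 A23 Q12 Q13 Q23 : R) (c c' c'' : ℂ)
    (h1 : Q12 * A13 = A23 * Q12) (h2 : Q23 * A12 = A13 * Q23)
    (h3 : Q13 * A23 = Q12 * Q13 - A12 * Q13)
    (h4 : Q23 * Q12 = Q12 * Q13) (h5 : Q13 * Q23 = Q12 * Q13)
    (hc : c'' + c * c'' - c * c' + c' * c'' = 0) :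
    (A12 + c • Q12) * (A13 + c'' • Q13) - (A23 + c' • Q23) * (A12 + c • Q12)
      + (A13 + c'' • Q13) * (A23 + c' • Q23)
    = A12 * A13 - A23 * A12 + A13 * A23 := by
  simp only [add_mul, mul_add, smul_mul_assoc, mul_smul_comm, smul_smul, h1, h2, h3, h4, h5]
  match_scalars <;> first | ring1 | linear_combination hc



/-- **Lemma `ovl`.** If `r̃ + r̃^{21} = P` and
`r₀(v) = (r̃ + e^v r̃^{21})/(1 - e^v)`, then the AYBE-type cubic expression in `r₀` is
independent of the spectral parameters and equals the corresponding expression in `r̃`. -/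
theorem trig_cubic_constant (n : ℕ) (hn : 2 ≤ n) (rt : M2 n)
    (hrt : rt + flipT rt = Pmat n)
    (r0 : ℂ → M2 n)
    (hr0 : ∀ v : ℂ, r0 v = (1 - Complex.exp v)⁻¹ • (rt + Complex.exp v • flipT rt)) :
    ∀ v v' : ℂ, Complex.exp v ≠ 1 → Complex.exp v' ≠ 1 → Complex.exp (v + v') ≠ 1 →
      emb12 (r0 v) * emb13 (r0 (v + v'))
          - emb23 (r0 v') * emb12 (r0 v)
          + emb13 (r0 (v + v')) * emb23 (r0 v')
        = emb12 rt * emb13 rt - emb23 rt * emb12 rt + emb13 rt * emb23 rt := by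
  intro v v' hv hv' hvv
  have hflip : flipT rt = Pmat n - rt := by rw [← hrt]; abel
  have key : ∀ w : ℂ, Complex.exp w ≠ 1 →
      r0 w = rt + (Complex.exp w * (1 - Complex.exp w)⁻¹) • Pmat n := by
    intro w hw
    have hne : (1 - Complex.exp w) ≠ 0 := sub_ne_zero.mpr (Ne.symm hw)
    rw [hr0 w, hflip]
    rw [show rt + Complex.exp w • (Pmat n - rt)
        = (1 - Complex.exp w) • rt + Complex.exp w • Pmat n by
      rw [smul_sub]; module]
    rw [smul_add, smul_smul, inv_mul_cancel₀ hne, one_smul, smul_smul]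
    ring_nf
  rw [key v hv, key v' hv', key (v + v') hvv]
  rw [emb12_add, emb12_smul, emb13_add, emb13_smul, emb23_add, emb23_smul]
  have h3 : emb13 (Pmat n) * emb23 rt
      = emb12 (Pmat n) * emb13 (Pmat n) - emb12 rt * emb13 (Pmat n) := by
    rw [lemB rt, hflip]
    rw [show Pmat n - rt = Pmat n + (-1 : ℂ) • rt by simp [sub_eq_add_neg]]
    rw [emb12_add, emb12_smul, add_mul, smul_mul_assoc]
    simp [sub_eq_add_neg]
  have hc : Complex.exp (v + v') * (1 - Complex.exp (v + v'))⁻¹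
        + Complex.exp v * (1 - Complex.exp v)⁻¹
            * (Complex.exp (v + v') * (1 - Complex.exp (v + v'))⁻¹)
        - Complex.exp v * (1 - Complex.exp v)⁻¹ * (Complex.exp v' * (1 - Complex.exp v')⁻¹)
        + Complex.exp v' * (1 - Complex.exp v')⁻¹
            * (Complex.exp (v + v') * (1 - Complex.exp (v + v'))⁻¹) = 0 := by
    have ha : (1 - Complex.exp v) ≠ 0 := sub_ne_zero.mpr (Ne.symm hv)
    have hb : (1 - Complex.exp v') ≠ 0 := sub_ne_zero.mpr (Ne.symm hv')
    have hab : (1 - Complex.exp (v + v')) ≠ 0 := sub_ne_zero.mpr (Ne.symm hvv)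
    rw [Complex.exp_add] at hab ⊢
    field_simp
    ring
  exact cubic_aux _ _ _ _ _ _ _ _ _ (lemA rt) (lemC rt) h3 lemD lemE hc
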